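/- The variational objective L is strictly concave on ℝ^m × {positive-definite m×m matrices}: for all (w̄₁, S₁) ≠ (w̄₂, S₂) with S₁, S₂ positive definite and every λ ∈ (0,1), the matrix λS₁ + (1−λ)S₂ is positive definite and L(λw̄₁ + (1−λ)w̄₂, λS₁ + (1−λ)S₂) > λ L(w̄₁, S₁) + (1−λ) L(w̄₂, S₂). -/

import Mathlib

open Matrix Real BigOperators

/-- Scalar Gaussian density `N(y; μ, s2)`. -/
noncomputable def gaussPdf1 (y μ s2 : ℝ) : ℝ :=
  (2 * Real.pi * s2) ^ (-(1 : ℝ) / 2) * Real.exp (-(y - μ) ^ 2 / (2 * s2))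

/-- Gaussian KL divergence between `N(μ₁, C₁)` and `N(μ₂, C₂)` (closed form). -/
noncomputable def gaussKL {m : ℕ} (μ₁ μ₂ : Fin m → ℝ)
    (C₁ C₂ : Matrix (Fin m) (Fin m) ℝ) : ℝ :=
  (1 / 2) * ((C₂⁻¹ * C₁).trace + (μ₂ - μ₁) ⬝ᵥ (C₂⁻¹ *ᵥ (μ₂ - μ₁)) - (m : ℝ)
      + Real.log C₂.det - Real.log C₁.det)

/-- Variational objective `L(w̄, S)`. -/
noncomputable def Lobj {m T : ℕ} (φ : Fin T → Fin m → ℝ) (y : Fin T → ℝ) (σ2 : ℝ)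
    (w0 : Fin m → ℝ) (S0 : Matrix (Fin m) (Fin m) ℝ)
    (wb : Fin m → ℝ) (S : Matrix (Fin m) (Fin m) ℝ) : ℝ :=
  (∑ t, (Real.log (gaussPdf1 (y t) (wb ⬝ᵥ φ t) σ2)
      - (1 / 2) * σ2⁻¹ * (φ t ⬝ᵥ (S *ᵥ φ t))))
    - gaussKL wb w0 S S0

/-!
The objective splits as `LobjMean w̄ + LobjCov S`. In `LobjMean` the log-likelihood terms are
concave in `w̄` (up to constants each is minus the square of an affine function of `w̄`), and the
prior term is minus the quadratic form of the positive-definite `S₀⁻¹`, hence strictly concave.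
`LobjCov` is `(1/2) log det S` minus an affine function of `S`, and `log det` is strictly concave
on positive-definite matrices: writing `A = Rᵀ R` and `B = Rᵀ C R`, the inequality
`a log det A + b log det B < log det (a A + b B)` reduces to `b log det C < log det (a + b C)` for
`C ≠ 1`, which is the strict concavity of `log` applied to the eigenvalues of `C`. Finally, a sum
of strictly concave functions of separate variables is strictly concave on the product.
-/

open Set

section Convexity

variable {𝕜 E F β ι : Type*} [Semiring 𝕜] [PartialOrder 𝕜] [AddCommMonoid E] [AddCommMonoid F]
  [AddCommMonoid β] [PartialOrder β] [IsOrderedCancelAddMonoid β] [Module 𝕜 E] [Module 𝕜 F]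
  [Module 𝕜 β]

theorem ConcaveOn.sum {s : Set E} (hs : Convex 𝕜 s) {t : Finset ι} {f : ι → E → β}
    (hf : ∀ i ∈ t, ConcaveOn 𝕜 s (f i)) : ConcaveOn 𝕜 s (fun x => ∑ i ∈ t, f i x) := by
  induction t using Finset.cons_induction with
  | empty => simpa using concaveOn_const (0 : β) hs
  | cons i t hi ih =>
    simp only [Finset.sum_cons]
    exact (hf i (Finset.mem_cons_self i t)).add (ih fun j hj => hf j (Finset.mem_cons_of_mem hj))

theorem StrictConcaveOn.prod_add {s : Set E} {t : Set F} {f : E → β} {g : F → β}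
    (hf : StrictConcaveOn 𝕜 s f) (hg : StrictConcaveOn 𝕜 t g) :
    StrictConcaveOn 𝕜 (s ×ˢ t) (fun p => f p.1 + g p.2) := by
  refine ⟨hf.1.prod hg.1, fun p hp q hq hpq a b ha hb hab => ?_⟩
  simp only [Prod.fst_add, Prod.snd_add, Prod.smul_fst, Prod.smul_snd]
  rw [smul_add, smul_add, add_add_add_comm]
  by_cases h₁ : p.1 = q.1
  · have h₂ : p.2 ≠ q.2 := fun h₂ => hpq (Prod.ext h₁ h₂)
    exact add_lt_add_of_le_of_lt (hf.concaveOn.2 hp.1 hq.1 ha.le hb.le hab)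
      (hg.2 hp.2 hq.2 h₂ ha hb hab)
  · exact add_lt_add_of_lt_of_le (hf.2 hp.1 hq.1 h₁ ha hb hab)
      (hg.concaveOn.2 hp.2 hq.2 ha.le hb.le hab)

end Convexity

section ConstMul

variable {E : Type*} [AddCommMonoid E] [SMul ℝ E] {s : Set E} {f : E → ℝ} {c : ℝ}

theorem StrictConvexOn.const_mul (hc : 0 < c) (hf : StrictConvexOn ℝ s f) :
    StrictConvexOn ℝ s (fun x => c * f x) :=
  ⟨hf.1, fun x hx y hy hxy a b ha hb hab => by
    have := mul_lt_mul_of_pos_left (hf.2 hx hy hxy ha hb hab) hc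
    simp only [smul_eq_mul] at this ⊢
    linarith⟩

theorem StrictConcaveOn.const_mul (hc : 0 < c) (hf : StrictConcaveOn ℝ s f) :
    StrictConcaveOn ℝ s (fun x => c * f x) :=
  ⟨hf.1, fun x hx y hy hxy a b ha hb hab => by
    have := mul_lt_mul_of_pos_left (hf.2 hx hy hxy ha hb hab) hc
    simp only [smul_eq_mul] at this ⊢
    linarith⟩

end ConstMul

namespace Matrix

variable {n : Type*}

theorem convex_setOf_posDef : Convex ℝ {A : Matrix n n ℝ | A.PosDef} := by
  intro A hA B hB a b ha hb hab
  rcases ha.eq_or_lt with rfl | ha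
  · simpa [show b = 1 by linarith] using hB
  rcases hb.eq_or_lt with rfl | hb
  · simpa [show a = 1 by linarith] using hA
  exact (hA.smul ha).add (hB.smul hb)

variable [Fintype n]

theorem IsSymm.dotProduct_mulVec_smul_add_smul {R : Type*} [CommRing R] {P : Matrix n n R}
    (hP : P.IsSymm) (u v : n → R) {a b : R} (hab : a + b = 1) :
    (a • u + b • v) ⬝ᵥ P *ᵥ (a • u + b • v) =
      a * (u ⬝ᵥ P *ᵥ u) + b * (v ⬝ᵥ P *ᵥ v) - a * b * ((u - v) ⬝ᵥ P *ᵥ (u - v)) := by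
  have hvu : v ⬝ᵥ P *ᵥ u = u ⬝ᵥ P *ᵥ v := by
    rw [dotProduct_mulVec, ← mulVec_transpose, hP.eq, dotProduct_comm]
  obtain rfl : b = 1 - a := eq_sub_of_add_eq' hab
  simp only [mulVec_add, mulVec_sub, mulVec_smul, dotProduct_add, dotProduct_sub, add_dotProduct,
    sub_dotProduct, dotProduct_smul, smul_dotProduct, smul_eq_mul, hvu]
  ring

theorem PosDef.strictConvexOn_dotProduct_mulVec {P : Matrix n n ℝ} (hP : P.PosDef) :
    StrictConvexOn ℝ univ (fun x => x ⬝ᵥ P *ᵥ x) := by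
  have hP' : P.IsSymm := isHermitian_iff_isSymm.1 hP.isHermitian
  refine ⟨convex_univ, fun u _ v _ huv a b ha hb hab => ?_⟩
  have hpos := hP.dotProduct_mulVec_pos (sub_ne_zero.2 huv)
  rw [star_trivial] at hpos
  simp only [hP'.dotProduct_mulVec_smul_add_smul u v hab, smul_eq_mul]
  nlinarith [mul_pos ha hb]

variable [DecidableEq n]

theorem IsHermitian.det_cfc {A : Matrix n n ℝ} (hA : A.IsHermitian) (f : ℝ → ℝ) :
    (cfc f A).det = ∏ i, f (hA.eigenvalues i) := by
  rw [hA.cfc_eq]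
  simp [IsHermitian.cfc, -Unitary.conjStarAlgAut_apply]

theorem IsHermitian.eq_one_of_eigenvalues_eq_one {A : Matrix n n ℝ} (hA : A.IsHermitian)
    (h : ∀ i, hA.eigenvalues i = 1) : A = 1 := by
  calc A = cfc (fun _ => (1 : ℝ)) A := by
        conv_lhs => rw [← cfc_id' ℝ A]
        refine cfc_congr fun x hx => ?_
        rw [hA.spectrum_real_eq_range_eigenvalues] at hx
        obtain ⟨i, rfl⟩ := hx
        exact h i
    _ = 1 := by rw [cfc_const 1 A, map_one]

theorem PosDef.mul_log_det_lt_log_det_smul_one_add_smul {C : Matrix n n ℝ} (hC : C.PosDef)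
    (hC1 : C ≠ 1) {a b : ℝ} (ha : 0 < a) (hb : 0 < b) (hab : a + b = 1) :
    b * log C.det < log (a • 1 + b • C).det := by
  have hCh := hC.isHermitian
  have hpos : ∀ i, 0 < hCh.eigenvalues i := hC.eigenvalues_pos
  have hcfc : cfc (fun x => a + b * x) C = a • 1 + b • C := by
    rw [cfc_const_add (R := ℝ) a (fun x => b * x) C, cfc_const_mul_id (R := ℝ) b C,
      Algebra.algebraMap_eq_smul_one]
  obtain ⟨i₀, hi₀⟩ : ∃ i, hCh.eigenvalues i ≠ 1 := by
    by_contra! h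
    exact hC1 (hCh.eq_one_of_eigenvalues_eq_one h)
  have hlog : ∀ i, b * log (hCh.eigenvalues i) ≤ log (a + b * hCh.eigenvalues i) := fun i => by
    simpa using strictConcaveOn_log_Ioi.concaveOn.2 (mem_Ioi.2 one_pos) (mem_Ioi.2 (hpos i))
      ha.le hb.le hab
  have hlog_lt : b * log (hCh.eigenvalues i₀) < log (a + b * hCh.eigenvalues i₀) := by
    simpa using strictConcaveOn_log_Ioi.2 (mem_Ioi.2 one_pos) (mem_Ioi.2 (hpos i₀))
      hi₀.symm ha hb hab
  rw [← hcfc, hCh.det_cfc, hCh.det_eq_prod_eigenvalues]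
  simp only [RCLike.ofReal_real_eq_id, id]
  rw [log_prod (fun i _ => (hpos i).ne'), log_prod (fun i _ => by have := hpos i; positivity),
    Finset.mul_sum]
  exact Finset.sum_lt_sum (fun i _ => hlog i) ⟨i₀, Finset.mem_univ _, hlog_lt⟩

open scoped MatrixOrder in
theorem strictConcaveOn_log_det :
    StrictConcaveOn ℝ {A : Matrix n n ℝ | A.PosDef} (fun A => log A.det) := by
  refine ⟨convex_setOf_posDef, fun A hA B hB hAB a b ha hb hab => ?_⟩
  obtain ⟨R, rfl⟩ := CStarAlgebra.nonneg_iff_eq_star_mul_self.mp hA.posSemidef.nonneg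
  have hdet : ∀ X, (star R * X * R).det = (star R * R).det * X.det := fun X => by
    simp only [det_mul]; ring
  have hR : IsUnit R.det := by
    have := (isUnit_iff_isUnit_det _).1 hA.isUnit
    rw [det_mul] at this
    exact isUnit_of_mul_isUnit_right this
  set C := star R⁻¹ * B * R⁻¹ with hC_def
  have hC : C.PosDef := (IsUnit.posDef_star_left_conjugate_iff
    (isUnit_nonsing_inv_iff.2 ((isUnit_iff_isUnit_det _).2 hR))).2 hB
  have hRCR : star R * C * R = B := by
    have hR' : IsUnit Rᴴ.det := by rwa [det_conjTranspose, star_trivial]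
    simp only [hC_def, star_eq_conjTranspose, conjTranspose_nonsing_inv]
    rw [← mul_assoc, ← mul_assoc, mul_nonsing_inv _ hR', one_mul,
      nonsing_inv_mul_cancel_right _ _ hR]
  have hC1 : C ≠ 1 := fun h => hAB (by rw [← hRCR, h, mul_one])
  have hcomb : a • (star R * R) + b • B = star R * (a • 1 + b • C) * R := by
    rw [← hRCR]
    simp only [mul_add, add_mul, mul_smul_comm, smul_mul_assoc, mul_one]
  have hAdet : 0 < (star R * R).det := hA.det_pos
  have hsplit : a * log (star R * R).det + b * log (star R * R).det = log (star R * R).det := by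
    rw [← add_mul, hab, one_mul]
  show a * log (star R * R).det + b * log B.det < log (a • (star R * R) + b • B).det
  rw [hcomb, ← hRCR, hdet, hdet, log_mul hAdet.ne' hC.det_pos.ne',
    log_mul hAdet.ne' (convex_setOf_posDef PosDef.one hC ha.le hb.le hab).det_pos.ne']
  linarith [hC.mul_log_det_lt_log_det_smul_one_add_smul hC1 ha hb hab]

end Matrix

theorem log_gaussPdf1 {y μ s2 : ℝ} (hs2 : 0 < s2) :
    log (gaussPdf1 y μ s2) = -(1 / 2) * log (2 * π * s2) - (y - μ) ^ 2 / (2 * s2) := by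
  unfold gaussPdf1
  rw [log_mul (by positivity) (exp_ne_zero _), log_rpow (by positivity), log_exp]
  ring

theorem concaveOn_log_gaussPdf1 (y : ℝ) {s2 : ℝ} (hs2 : 0 < s2) :
    ConcaveOn ℝ univ (fun μ => log (gaussPdf1 y μ s2)) := by
  refine ⟨convex_univ, fun u _ v _ a b ha hb hab => ?_⟩
  obtain rfl : b = 1 - a := eq_sub_of_add_eq' hab
  simp only [log_gaussPdf1 hs2, smul_eq_mul, div_eq_mul_inv]
  nlinarith [mul_nonneg (mul_nonneg (mul_nonneg ha hb) (sq_nonneg (u - v)))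
    (inv_pos.2 (by positivity : 0 < 2 * s2)).le]

section Objective

variable {m T : ℕ} (φ : Fin T → Fin m → ℝ) (y : Fin T → ℝ) (σ2 : ℝ) (w0 : Fin m → ℝ)
  (S0 : Matrix (Fin m) (Fin m) ℝ)

noncomputable def LobjMean (wb : Fin m → ℝ) : ℝ :=
  ∑ t, log (gaussPdf1 (y t) (wb ⬝ᵥ φ t) σ2) - 1 / 2 * ((w0 - wb) ⬝ᵥ S0⁻¹ *ᵥ (w0 - wb))

noncomputable def LobjCov (S : Matrix (Fin m) (Fin m) ℝ) : ℝ :=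
  1 / 2 * log S.det -
    (1 / 2 * σ2⁻¹ * ∑ t, φ t ⬝ᵥ S *ᵥ φ t + 1 / 2 * ((S0⁻¹ * S).trace - m + log S0.det))

theorem Lobj_eq_LobjMean_add_LobjCov (wb : Fin m → ℝ) (S : Matrix (Fin m) (Fin m) ℝ) :
    Lobj φ y σ2 w0 S0 wb S = LobjMean φ y σ2 w0 S0 wb + LobjCov φ σ2 S0 S := by
  rw [Lobj, LobjMean, LobjCov, gaussKL, Finset.sum_sub_distrib, ← Finset.mul_sum]
  ring

variable {σ2 S0}

theorem strictConcaveOn_LobjMean (hσ2 : 0 < σ2) (hS0 : S0.PosDef) :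
    StrictConcaveOn ℝ univ (LobjMean φ y σ2 w0 S0) := by
  have hquad : StrictConvexOn ℝ univ (fun w => (w0 - w) ⬝ᵥ S0⁻¹ *ᵥ (w0 - w)) := by
    refine (hS0.inv.strictConvexOn_dotProduct_mulVec.translate_right (-w0)).congr fun w _ => ?_
    show (-w0 + w) ⬝ᵥ S0⁻¹ *ᵥ (-w0 + w) = _
    rw [neg_add_eq_sub, ← neg_sub w0 w, mulVec_neg, dotProduct_neg, neg_dotProduct, neg_neg]
  have hlik : ConcaveOn ℝ univ (fun w => ∑ t, log (gaussPdf1 (y t) (w ⬝ᵥ φ t) σ2)) :=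
    ConcaveOn.sum convex_univ fun t _ =>
      (concaveOn_log_gaussPdf1 (y t) hσ2).comp_linearMap ((dotProductBilin ℝ ℝ).flip (φ t))
  exact hlik.sub_strictConvexOn (hquad.const_mul one_half_pos)

theorem strictConcaveOn_LobjCov : StrictConcaveOn ℝ {S | S.PosDef} (LobjCov φ σ2 S0) := by
  have haff : ConvexOn ℝ {S : Matrix (Fin m) (Fin m) ℝ | S.PosDef} (fun S =>
      1 / 2 * σ2⁻¹ * ∑ t, φ t ⬝ᵥ S *ᵥ φ t + 1 / 2 * ((S0⁻¹ * S).trace - m + log S0.det)) := by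
    refine ⟨convex_setOf_posDef, fun S₁ _ S₂ _ a b _ _ hab => le_of_eq ?_⟩
    simp only [add_mulVec, smul_mulVec, dotProduct_add, dotProduct_smul, mul_add, trace_add,
      trace_smul, Finset.sum_add_distrib, smul_eq_mul, mul_smul_comm, ← Finset.mul_sum]
    linear_combination (1 / 2 * (m : ℝ) - 1 / 2 * log S0.det) * hab
  exact (strictConcaveOn_log_det.const_mul one_half_pos).sub_convexOn haff

theorem strictConcaveOn_Lobj (hσ2 : 0 < σ2) (hS0 : S0.PosDef) :
    StrictConcaveOn ℝ (univ ×ˢ {S | S.PosDef}) (fun p => Lobj φ y σ2 w0 S0 p.1 p.2) := by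
  simp only [Lobj_eq_LobjMean_add_LobjCov]
  exact (strictConcaveOn_LobjMean φ y w0 hσ2 hS0).prod_add (strictConcaveOn_LobjCov φ)

end Objective

theorem stmt9_general (m T : ℕ)
    (φ : Fin T → Fin m → ℝ) (y : Fin T → ℝ)
    (σ2 : ℝ) (hσ2 : 0 < σ2) (w0 : Fin m → ℝ)
    (S0 : Matrix (Fin m) (Fin m) ℝ) (hS0 : S0.PosDef) :
    ∀ (wb₁ wb₂ : Fin m → ℝ) (S₁ S₂ : Matrix (Fin m) (Fin m) ℝ),
      S₁.PosDef → S₂.PosDef → (wb₁, S₁) ≠ (wb₂, S₂) →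
      ∀ l : ℝ, 0 < l → l < 1 →
        (l • S₁ + (1 - l) • S₂).PosDef ∧
          l * Lobj φ y σ2 w0 S0 wb₁ S₁ + (1 - l) * Lobj φ y σ2 w0 S0 wb₂ S₂
            < Lobj φ y σ2 w0 S0 (l • wb₁ + (1 - l) • wb₂)
                (l • S₁ + (1 - l) • S₂) := by
  intro wb₁ wb₂ S₁ S₂ hS₁ hS₂ hne l hl₀ hl₁
  have hl : l + (1 - l) = 1 := add_sub_cancel l 1
  refine ⟨convex_setOf_posDef hS₁ hS₂ hl₀.le (sub_nonneg.2 hl₁.le) hl, ?_⟩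
  simpa using (strictConcaveOn_Lobj φ y w0 hσ2 hS0).2 (mk_mem_prod (mem_univ wb₁) hS₁)
    (mk_mem_prod (mem_univ wb₂) hS₂) hne hl₀ (sub_pos.2 hl₁) hl

/-- The variational objective is strictly concave on
`ℝ^m × {positive-definite matrices}`. -/
theorem stmt9 (m T : ℕ) (hm : 1 ≤ m) (hT : 1 ≤ T)
    (φ : Fin T → Fin m → ℝ) (y : Fin T → ℝ)
    (σ2 : ℝ) (hσ2 : 0 < σ2) (w0 : Fin m → ℝ)
    (S0 : Matrix (Fin m) (Fin m) ℝ) (hS0 : S0.PosDef) :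
    ∀ (wb₁ wb₂ : Fin m → ℝ) (S₁ S₂ : Matrix (Fin m) (Fin m) ℝ),
      S₁.PosDef → S₂.PosDef → (wb₁, S₁) ≠ (wb₂, S₂) →
      ∀ l : ℝ, 0 < l → l < 1 →
        (l • S₁ + (1 - l) • S₂).PosDef ∧
          l * Lobj φ y σ2 w0 S0 wb₁ S₁ + (1 - l) * Lobj φ y σ2 w0 S0 wb₂ S₂
            < Lobj φ y σ2 w0 S0 (l • wb₁ + (1 - l) • wb₂)
                (l • S₁ + (1 - l) • S₂) :=
  stmt9_general m T φ y σ2 hσ2 w0 S0 hS0
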